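/- Let A be a complex Banach algebra possessing a contractive approximate identity, and let H be a Hilbert A-module. Then H is a generator for the category of Hilbert A-modules if and only if Tr_K(H) = K for every Hilbert A-module K. -/

import Mathlib

noncomputable section

open Filter

open scoped ENNReal

/-- A contractive approximate identity for a (possibly non-unital) normed algebra `A`:
a net `(e i)`, indexed by a nontrivial filter, with `‖e i‖ ≤ 1` for all `i`, such that
`e i * a → a` and `a * e i → a` in norm for every `a ∈ A`. -/
def HasCAI (A : Type) [NonUnitalNormedRing A] : Prop :=
  ∃ (ι : Type) (l : Filter ι) (e : ι → A), l.NeBot ∧ (∀ i, ‖e i‖ ≤ 1) ∧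
    ∀ a : A, Tendsto (fun i => e i * a) l (nhds a) ∧ Tendsto (fun i => a * e i) l (nhds a)

variable (A : Type) [NonUnitalNormedRing A] [NormedSpace ℂ A] [IsScalarTower ℂ A A]
  [SMulCommClass ℂ A A]

/-- A Hilbert `A`-module structure on the Hilbert space `K`: a contractive algebra
homomorphism `π : A → B(K)` which is nondegenerate, i.e. the linear span of
`{π a x : a ∈ A, x ∈ K}` is dense in `K`. -/
def IsHilbertRep {K : Type} [NormedAddCommGroup K] [InnerProductSpace ℂ K] [CompleteSpace K]
    (π : A →ₙₐ[ℂ] (K →L[ℂ] K)) : Prop :=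
  (∀ a : A, ‖π a‖ ≤ ‖a‖) ∧
  Dense ((Submodule.span ℂ {x : K | ∃ (a : A) (y : K), π a y = x} : Submodule ℂ K) : Set K)

/-- A bounded `A`-module map between Hilbert `A`-modules. -/
def IsModuleMap {K L : Type} [NormedAddCommGroup K] [InnerProductSpace ℂ K]
    [NormedAddCommGroup L] [InnerProductSpace ℂ L]
    (πK : A →ₙₐ[ℂ] (K →L[ℂ] K)) (πL : A →ₙₐ[ℂ] (L →L[ℂ] L)) (T : K →L[ℂ] L) : Prop :=
  ∀ (a : A) (x : K), T (πK a x) = πL a (T x)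

/-- `H` is a generator for the category of Hilbert `A`-modules: for all Hilbert
`A`-modules `K`, `L` and every nonzero bounded `A`-module map `R : K → L` there is a
bounded `A`-module map `V : H → K` with `R ∘ V ≠ 0`. -/
def IsGenerator {H : Type} [NormedAddCommGroup H] [InnerProductSpace ℂ H] [CompleteSpace H]
    (πH : A →ₙₐ[ℂ] (H →L[ℂ] H)) : Prop :=
  ∀ (K L : Type) [NormedAddCommGroup K] [InnerProductSpace ℂ K] [CompleteSpace K]
    [NormedAddCommGroup L] [InnerProductSpace ℂ L] [CompleteSpace L],
    ∀ (πK : A →ₙₐ[ℂ] (K →L[ℂ] K)) (πL : A →ₙₐ[ℂ] (L →L[ℂ] L)),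
      IsHilbertRep A πK → IsHilbertRep A πL →
      ∀ R : K →L[ℂ] L, IsModuleMap A πK πL R → R ≠ 0 →
        ∃ V : H →L[ℂ] K, IsModuleMap A πH πK V ∧ R.comp V ≠ 0

/-- The trace `Tr_K(H)`: the closed linear span in `K` of the union of the ranges of all
bounded `A`-module maps `H → K`. -/
def traceSub {H K : Type} [NormedAddCommGroup H] [InnerProductSpace ℂ H] [CompleteSpace H]
    [NormedAddCommGroup K] [InnerProductSpace ℂ K] [CompleteSpace K]
    (πH : A →ₙₐ[ℂ] (H →L[ℂ] H)) (πK : A →ₙₐ[ℂ] (K →L[ℂ] K)) : Submodule ℂ K :=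
  (Submodule.span ℂ
    {y : K | ∃ T : H →L[ℂ] K, IsModuleMap A πH πK T ∧ y ∈ Set.range ⇑T}).topologicalClosure

/-!
A bounded operator `R` on `K` vanishes on `Tr_K(H)` exactly when `R ∘ V = 0` for every module
map `V : H → K`, which gives one direction at once. Conversely, the trace `T` is a closed
invariant subspace, so the quotient `K ⧸ T`, realised on `Tᗮ` by compressing the action, is again
a Hilbert module, and the orthogonal projection `K → Tᗮ` is a module map killing every `V`.
For a generator it must therefore vanish, i.e. `T = K`.
-/

section Compression

variable {K : Type} [NormedAddCommGroup K] [InnerProductSpace ℂ K] (T : Submodule ℂ K)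
  [T.HasOrthogonalProjection]

theorem orthogonalProjectionOnto_orthogonal_apply_orthogonalProjectionOnto {S : K →L[ℂ] K}
    (hS : ∀ y ∈ T, S y ∈ T) (x : K) :
    Tᗮ.orthogonalProjectionOnto (S (Tᗮ.orthogonalProjectionOnto x)) =
      Tᗮ.orthogonalProjectionOnto (S x) := by
  have hx : x - Tᗮ.orthogonalProjectionOnto x ∈ T := by
    simp [Submodule.orthogonalProjectionOnto_orthogonal]
  have := Submodule.orthogonalProjectionOnto_orthogonal_apply_eq_zero (hS _ hx)
  rwa [map_sub, map_sub, sub_eq_zero, eq_comm] at this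

variable {R : Type*} [NonUnitalNonAssocSemiring R] [Module ℂ R] (π : R →ₙₐ[ℂ] (K →L[ℂ] K))
  (hT : ∀ r, ∀ y ∈ T, π r y ∈ T)

/-- This realises the quotient representation on `K ⧸ T`, which is why it is multiplicative even
though `Tᗮ` need not be invariant. -/
def orthogonalCompression : R →ₙₐ[ℂ] (Tᗮ →L[ℂ] Tᗮ) where
  toFun r := Tᗮ.orthogonalProjectionOnto ∘L π r ∘L Tᗮ.subtypeL
  map_smul' c r := by ext; simp
  map_zero' := by ext; simp
  map_add' r s := by ext; simp
  map_mul' r s := by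
    ext z
    simp only [map_mul, mul_apply_eq_comp, ContinuousLinearMap.comp_apply,
      Submodule.subtypeL_apply,
      orthogonalProjectionOnto_orthogonal_apply_orthogonalProjectionOnto T (hT r)]

theorem norm_orthogonalCompression_le (r : R) :
    ‖orthogonalCompression T π hT r‖ ≤ ‖π r‖ :=
  calc ‖Tᗮ.orthogonalProjectionOnto ∘L π r ∘L Tᗮ.subtypeL‖
      ≤ ‖Tᗮ.orthogonalProjectionOnto‖ * (‖π r‖ * ‖Tᗮ.subtypeL‖) :=
        (ContinuousLinearMap.opNorm_comp_le _ _).trans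
          (by gcongr; exact ContinuousLinearMap.opNorm_comp_le _ _)
    _ ≤ 1 * (‖π r‖ * 1) := by
        gcongr
        · exact Tᗮ.orthogonalProjectionOnto_norm_le
        · exact Submodule.norm_subtypeL_le _
    _ = ‖π r‖ := by ring

end Compression

section HilbertModule

variable {B : Type} [NonUnitalNormedRing B] [NormedSpace ℂ B]
  {K : Type} [NormedAddCommGroup K] [InnerProductSpace ℂ K] (T : Submodule ℂ K)
  [T.HasOrthogonalProjection] {πK : B →ₙₐ[ℂ] (K →L[ℂ] K)} (hT : ∀ b, ∀ y ∈ T, πK b y ∈ T)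

theorem isModuleMap_orthogonalProjectionOnto_orthogonal :
    IsModuleMap B πK (orthogonalCompression T πK hT) Tᗮ.orthogonalProjectionOnto := fun a x =>
  (orthogonalProjectionOnto_orthogonal_apply_orthogonalProjectionOnto T (hT a) x).symm

theorem isHilbertRep_orthogonalCompression [CompleteSpace K] (hK : IsHilbertRep B πK) :
    IsHilbertRep B (orthogonalCompression T πK hT) := by
  refine ⟨fun a => (norm_orthogonalCompression_le T πK hT a).trans (hK.1 a), ?_⟩
  have hsurj : Function.Surjective Tᗮ.orthogonalProjectionOnto := fun z =>
    ⟨z, Submodule.orthogonalProjectionOnto_mem_subspace_eq_self z⟩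
  have hdense := hsurj.denseRange.dense_image Tᗮ.orthogonalProjectionOnto.continuous hK.2
  refine hdense.mono ((Submodule.image_span_subset_span
    (Tᗮ.orthogonalProjectionOnto : K →ₗ[ℂ] Tᗮ) _).trans (Submodule.span_mono ?_))
  rintro _ ⟨_, ⟨a, y, rfl⟩, rfl⟩
  exact ⟨a, Tᗮ.orthogonalProjectionOnto y,
    (isModuleMap_orthogonalProjectionOnto_orthogonal T hT a y).symm⟩

end HilbertModule

section Trace

variable {B : Type} [NonUnitalNormedRing B] [NormedSpace ℂ B]
  {H K : Type} [NormedAddCommGroup H] [InnerProductSpace ℂ H] [CompleteSpace H]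
  [NormedAddCommGroup K] [InnerProductSpace ℂ K] [CompleteSpace K]
  {πH : B →ₙₐ[ℂ] (H →L[ℂ] H)} {πK : B →ₙₐ[ℂ] (K →L[ℂ] K)}

theorem apply_mem_traceSub {V : H →L[ℂ] K} (hV : IsModuleMap B πH πK V) (x : H) :
    V x ∈ traceSub B πH πK :=
  Submodule.le_topologicalClosure _ (Submodule.subset_span ⟨V, hV, x, rfl⟩)

theorem traceSub_le {S : Submodule ℂ K} (hS : IsClosed (S : Set K))
    (h : ∀ V : H →L[ℂ] K, IsModuleMap B πH πK V → ∀ x, V x ∈ S) : traceSub B πH πK ≤ S :=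
  Submodule.topologicalClosure_minimal _
    (Submodule.span_le.2 fun _ ⟨V, hV, x, hx⟩ => hx ▸ h V hV x) hS

theorem rep_apply_mem_traceSub (b : B) {y : K} (hy : y ∈ traceSub B πH πK) :
    πK b y ∈ traceSub B πH πK :=
  traceSub_le (S := (traceSub B πH πK).comap (πK b : K →ₗ[ℂ] K))
    ((Submodule.isClosed_topologicalClosure _).preimage (πK b).continuous)
    (fun V hV x => by simpa [← hV b x] using apply_mem_traceSub hV (πH b x)) hy

theorem traceSub_le_ker_iff {L : Type} [NormedAddCommGroup L] [NormedSpace ℂ L]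
    (R : K →L[ℂ] L) :
    traceSub B πH πK ≤ R.ker ↔ ∀ V : H →L[ℂ] K, IsModuleMap B πH πK V → R ∘L V = 0 := by
  refine ⟨fun h V hV => ?_, fun h => traceSub_le R.isClosed_ker fun V hV x => ?_⟩
  · ext x
    exact h (apply_mem_traceSub hV x)
  · simpa using congrArg (· x) (h V hV)

theorem traceSub_eq_top_of_isGenerator (hgen : IsGenerator B πH) (hK : IsHilbertRep B πK) :
    traceSub B πH πK = ⊤ := by
  set T := traceSub B πH πK
  have : CompleteSpace T := (Submodule.isClosed_topologicalClosure _).completeSpace_coe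
  have hT : ∀ b, ∀ y ∈ T, πK b y ∈ T := fun b _ => rep_apply_mem_traceSub b
  have hTQ : T ≤ Tᗮ.orthogonalProjectionOnto.ker := by
    rw [Submodule.ker_orthogonalProjectionOnto]
    exact T.le_orthogonal_orthogonal
  by_contra hne
  have hQ : Tᗮ.orthogonalProjectionOnto ≠ 0 := fun h =>
    hne <| Submodule.orthogonal_eq_bot_iff.1 <| (Submodule.orthogonal_eq_top_iff _).1 <| by
      rw [← Submodule.ker_orthogonalProjectionOnto, h]
      simp
  obtain ⟨V, hV, hQV⟩ := hgen K Tᗮ πK (orthogonalCompression T πK hT) hK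
    (isHilbertRep_orthogonalCompression T hT hK) Tᗮ.orthogonalProjectionOnto
    (isModuleMap_orthogonalProjectionOnto_orthogonal T hT) hQ
  exact hQV ((traceSub_le_ker_iff _).1 hTQ V hV)

theorem eq_zero_of_traceSub_eq_top (htr : traceSub B πH πK = ⊤) {L : Type}
    [NormedAddCommGroup L] [NormedSpace ℂ L] {R : K →L[ℂ] L}
    (hR : ∀ V : H →L[ℂ] K, IsModuleMap B πH πK V → R ∘L V = 0) : R = 0 := by
  ext x
  exact (htr ▸ (traceSub_le_ker_iff R).2 hR) (Submodule.mem_top (x := x))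

end Trace

theorem generator_iff_trace_eq_top
    (H : Type) [NormedAddCommGroup H] [InnerProductSpace ℂ H] [CompleteSpace H]
    (πH : A →ₙₐ[ℂ] (H →L[ℂ] H)) :
    IsGenerator A πH ↔
      ∀ (K : Type) [NormedAddCommGroup K] [InnerProductSpace ℂ K] [CompleteSpace K],
        ∀ (πK : A →ₙₐ[ℂ] (K →L[ℂ] K)), IsHilbertRep A πK → traceSub A πH πK = ⊤ := by
  refine ⟨fun hgen K _ _ _ πK hK => traceSub_eq_top_of_isGenerator hgen hK, ?_⟩
  intro htr K L _ _ _ _ _ _ πK πL hK _ R _ hR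
  by_contra! hRV
  exact hR (eq_zero_of_traceSub_eq_top (htr K πK hK) hRV)
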